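/- arXiv:1701.02552 — 3 statements merged into one kernel-verified Lean document; each statement's English description precedes it below -/
import Mathlib

section
/- For all indices i, j ∈ {1,…,N} and all vectors z, z' ∈ ℂ^N, the sets Λ_z^i and Λ_{z'}^j have nonempty intersection if and only if i = j and z ∼ z' (in which case Λ_z^i = Λ_{z'}^j). -/
open MeasureTheory
open scoped Classical

namespace SPI

/-! ## Ontology -/

/-- Ontic states: particle position `q`, field amplitudes `u`, field strengths `τ`. -/
abbrev Lam (N : ℕ) := Fin N × (Fin N → ℂ) × (Fin N → ℝ)

/-- The constraint region of `Λ`: `|u j| ≤ 1` and `τ j ∈ [0,1]`. -/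
def onticSet (N : ℕ) : Set (Lam N) :=
  {l | (∀ j, ‖l.2.1 j‖ ≤ 1) ∧ ∀ j, l.2.2 j ∈ Set.Icc (0 : ℝ) 1}

/-- Highest field strength `τ_max`. -/
noncomputable def tmax {N : ℕ} (τ : Fin N → ℝ) : ℝ := ⨆ j, τ j

/-- `Δ_τ u` : the amplitude vector with only maximal-strength entries retained. -/
noncomputable def deltaVec {N : ℕ} (τ : Fin N → ℝ) (u : Fin N → ℂ) : Fin N → ℂ :=
  fun j => if τ j = tmax τ then u j else 0

/-- Proportionality `z ∼ z'` of complex vectors (a nonzero multiple). -/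
def Propto {N : ℕ} (v w : Fin N → ℂ) : Prop := ∃ α : ℂ, α ≠ 0 ∧ v = α • w

/-- The subset `Λ_z^i` of the ontic state space. -/
def lamSet {N : ℕ} (z : Fin N → ℂ) (i : Fin N) : Set (Lam N) :=
  {l | l.1 = i ∧ l.2.2 i = tmax l.2.2 ∧ 0 < tmax l.2.2 ∧ Propto (deltaVec l.2.2 l.2.1) z}

/-- Membership in the auxiliary class `[z]_i`: a (Borel) probability measure giving
full measure to `Λ_z^i`. -/
def memClassI {N : ℕ} (z : Fin N → ℂ) (i : Fin N) (μ : Measure (Lam N)) : Prop :=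
  IsProbabilityMeasure μ ∧ μ (lamSet z i) = 1

/-- Membership in the class `[z]` (for a unit vector `z`): mixtures `∑ |z i|² • pᵢ`
with `pᵢ ∈ [z]_i` (terms with `z i = 0` omitted). -/
def memClass {N : ℕ} (z : Fin N → ℂ) (μ : Measure (Lam N)) : Prop :=
  ∃ f : Fin N → Measure (Lam N),
    (∀ i, z i ≠ 0 → memClassI z i (f i)) ∧
    μ = ∑ i, ENNReal.ofReal (‖z i‖ ^ 2) • f i

/-- The `j`-th standard basis vector of `ℂ^N`. -/
def eVec {N : ℕ} (j : Fin N) : Fin N → ℂ := fun m => if m = j then 1 else 0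

/-! ## Parallel gate configurations -/

/-- A parallel gate configuration: a partition of the paths `{1,…,N}` into free paths `Fr`,
detector paths `De`, phase-shifter paths `Sh` (phases `ω`), and a collection `Bs` of pairwise
disjoint pairs (beam splitters with constants `R`, `T`, `R + T = 1`). -/
structure Config (N : ℕ) where
  Fr : Finset (Fin N)
  De : Finset (Fin N)
  Sh : Finset (Fin N)
  ω : Fin N → ℝ
  Bs : Finset (Fin N × Fin N)
  R : Fin N × Fin N → ℝ
  T : Fin N × Fin N → ℝ
  hR : ∀ p ∈ Bs, 0 ≤ R p
  hT : ∀ p ∈ Bs, 0 ≤ T p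
  hRT : ∀ p ∈ Bs, R p + T p = 1
  hst : ∀ p ∈ Bs, p.1 ≠ p.2
  hBB : ∀ p ∈ Bs, ∀ q ∈ Bs, p ≠ q → p.1 ≠ q.1 ∧ p.1 ≠ q.2 ∧ p.2 ≠ q.1 ∧ p.2 ≠ q.2
  hFD : Disjoint Fr De
  hFS : Disjoint Fr Sh
  hDS : Disjoint De Sh
  hBdisj : ∀ p ∈ Bs, p.1 ∉ Fr ∧ p.2 ∉ Fr ∧ p.1 ∉ De ∧ p.2 ∉ De ∧ p.1 ∉ Sh ∧ p.2 ∉ Sh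
  hcover : ∀ m : Fin N, m ∈ Fr ∨ m ∈ De ∨ m ∈ Sh ∨ ∃ p ∈ Bs, m = p.1 ∨ m = p.2

/-- Path `m` enters some beam splitter of the configuration. -/
def inB {N : ℕ} (c : Config N) (m : Fin N) : Prop := ∃ p ∈ c.Bs, m = p.1 ∨ m = p.2

/-- The new field strengths `τ'` produced by the parallel gates. -/
noncomputable def newTau {N : ℕ} (c : Config N) (q : Fin N) (τ : Fin N → ℝ) : Fin N → ℝ :=
  fun m =>
    if m ∈ c.De then (if q = m then 1 else 0)
    else if hm : inB c m then max (τ hm.choose.1) (τ hm.choose.2) / 2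
    else τ m / 2

/-- The new field amplitudes `u'` produced by the parallel gates. -/
noncomputable def newAmp {N : ℕ} (c : Config N) (q : Fin N) (u : Fin N → ℂ) (τ : Fin N → ℝ) :
    Fin N → ℂ :=
  fun m =>
    if m ∈ c.De then (if q = m then 1 else u m)
    else if m ∈ c.Sh then Complex.exp (Complex.I * (c.ω m : ℂ)) * u m
    else if hm : inB c m then
      (let p := hm.choose
       let ts := max (τ p.1) (τ p.2)
       let us : ℂ := if τ p.1 = ts then u p.1 else 0
       let ut : ℂ := if τ p.2 = ts then u p.2 else 0
       if m = p.1 then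
         Complex.I * (Real.sqrt (c.R p) : ℂ) * us + (Real.sqrt (c.T p) : ℂ) * ut
       else
         (Real.sqrt (c.T p) : ℂ) * us + Complex.I * (Real.sqrt (c.R p) : ℂ) * ut)
    else u m

/-- One step of the dynamics: the Markov kernel `K` of the parallel gate configuration,
as a measure-valued map on ontic states. -/
noncomputable def step {N : ℕ} (c : Config N) (l : Lam N) : Measure (Lam N) :=
  let q := l.1
  let u' := newAmp c q l.2.1 l.2.2
  let τ' := newTau c q l.2.2
  if hq : inB c q then
    (let p := hq.choose
     let a := ‖u' p.1‖ ^ 2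
     let b := ‖u' p.2‖ ^ 2
     if a + b = 0 then Measure.dirac (q, u', τ')
     else ENNReal.ofReal (a / (a + b)) • Measure.dirac (p.1, u', τ')
        + ENNReal.ofReal (b / (a + b)) • Measure.dirac (p.2, u', τ'))
  else Measure.dirac (q, u', τ')

/-- The output measure `pK` of the kernel applied to an input measure `p`. -/
noncomputable def out {N : ℕ} (c : Config N) (μ : Measure (Lam N)) : Measure (Lam N) :=
  μ.bind (step c)

/-! ## Interferometric matrices -/

/-- The projector `P_j` onto component `j`. -/
def Pmat {N : ℕ} (j : Fin N) : Matrix (Fin N) (Fin N) ℂ :=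
  Matrix.diagonal (fun a => if a = j then 1 else 0)

/-- The phase-shifter matrix `S_k(ω)`. -/
noncomputable def Smat {N : ℕ} (k : Fin N) (ω : ℝ) : Matrix (Fin N) (Fin N) ℂ :=
  Matrix.diagonal (fun a => if a = k then Complex.exp (Complex.I * (ω : ℂ)) else 1)

/-- The beam-splitter matrix `B_st(R,T)`: identity outside `{s,t}` and
`[[i√R, √T],[√T, i√R]]` on components `{s,t}`. -/
noncomputable def Bmat {N : ℕ} (s t : Fin N) (R T : ℝ) : Matrix (Fin N) (Fin N) ℂ :=
  Matrix.of fun a b =>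
    if a = s then
      (if b = s then Complex.I * (Real.sqrt R : ℂ) else if b = t then (Real.sqrt T : ℂ) else 0)
    else if a = t then
      (if b = s then (Real.sqrt T : ℂ) else if b = t then Complex.I * (Real.sqrt R : ℂ) else 0)
    else if a = b then 1 else 0

/-- The matrix `Δ_τ` selecting the components of maximal strength. -/
noncomputable def Dmat {N : ℕ} (τ : Fin N → ℝ) : Matrix (Fin N) (Fin N) ℂ :=
  Matrix.diagonal (fun j => if τ j = tmax τ then 1 else 0)

/-- The matrix `Δ^(st)_τ` with `δ_{τ_s,max(τ_s,τ_t)}`, `δ_{τ_t,max(τ_s,τ_t)}` at `s`, `t`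
and `1` elsewhere on the diagonal. -/
noncomputable def DmatST {N : ℕ} (τ : Fin N → ℝ) (s t : Fin N) : Matrix (Fin N) (Fin N) ℂ :=
  Matrix.diagonal (fun m =>
    if m = s then (if τ s = max (τ s) (τ t) then 1 else 0)
    else if m = t then (if τ t = max (τ s) (τ t) then 1 else 0)
    else 1)

/-! ## Commutation lemmas -/

lemma commute_diagonal {N : ℕ} (d e : Fin N → ℂ) :
    Commute (Matrix.diagonal d) (Matrix.diagonal e) := by
  have h : (fun i => d i * e i) = fun i => e i * d i := funext fun i => mul_comm _ _
  show Matrix.diagonal d * Matrix.diagonal e = Matrix.diagonal e * Matrix.diagonal d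
  rw [Matrix.diagonal_mul_diagonal, Matrix.diagonal_mul_diagonal, h]

lemma oneSubP_diagonal {N : ℕ} (j : Fin N) :
    (1 : Matrix (Fin N) (Fin N) ℂ) - Pmat j
      = Matrix.diagonal (fun a => 1 - if a = j then 1 else 0) := by
  rw [Pmat, ← Matrix.diagonal_one, Matrix.diagonal_sub]

lemma commute_oneSubP {N : ℕ} (j j' : Fin N) :
    Commute ((1 : Matrix (Fin N) (Fin N) ℂ) - Pmat j) (1 - Pmat j') := by
  rw [oneSubP_diagonal, oneSubP_diagonal]; exact commute_diagonal _ _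

/-- A matrix which differs from the identity only inside the block `{s,t} × {s,t}`. -/
def IsBlock {N : ℕ} (s t : Fin N) (M : Matrix (Fin N) (Fin N) ℂ) : Prop :=
  ∀ a b, ¬((a = s ∨ a = t) ∧ (b = s ∨ b = t)) →
    M a b = (1 : Matrix (Fin N) (Fin N) ℂ) a b

lemma commute_of_isBlock {N : ℕ} {s t s' t' : Fin N} {M M' : Matrix (Fin N) (Fin N) ℂ}
    (hM : IsBlock s t M) (hM' : IsBlock s' t' M')
    (h1 : s ≠ s') (h2 : s ≠ t') (h3 : t ≠ s') (h4 : t ≠ t') : Commute M M' := by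
  have hrow : ∀ a b : Fin N, a ≠ s → a ≠ t → (M - 1) a b = 0 := by
    intro a b ha hb
    have h := hM a b (by tauto)
    simp [Matrix.sub_apply, h]
  have hcol : ∀ a b : Fin N, b ≠ s → b ≠ t → (M - 1) a b = 0 := by
    intro a b hb1 hb2
    have h := hM a b (by tauto)
    simp [Matrix.sub_apply, h]
  have hrow' : ∀ a b : Fin N, a ≠ s' → a ≠ t' → (M' - 1) a b = 0 := by
    intro a b ha hb
    have h := hM' a b (by tauto)
    simp [Matrix.sub_apply, h]
  have hcol' : ∀ a b : Fin N, b ≠ s' → b ≠ t' → (M' - 1) a b = 0 := by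
    intro a b hb1 hb2
    have h := hM' a b (by tauto)
    simp [Matrix.sub_apply, h]
  have hEE' : (M - 1) * (M' - 1) = 0 := by
    ext a b
    rw [Matrix.mul_apply, Matrix.zero_apply]
    apply Finset.sum_eq_zero
    intro k _
    by_cases hk : k = s ∨ k = t
    · have : (M' - 1) k b = 0 := by
        rcases hk with h | h
        · subst h; exact hrow' _ _ h1 h2
        · subst h; exact hrow' _ _ h3 h4
      rw [this, mul_zero]
    · push_neg at hk
      rw [hcol a k hk.1 hk.2, zero_mul]
  have hE'E : (M' - 1) * (M - 1) = 0 := by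
    ext a b
    rw [Matrix.mul_apply, Matrix.zero_apply]
    apply Finset.sum_eq_zero
    intro k _
    by_cases hk : k = s' ∨ k = t'
    · have : (M - 1) k b = 0 := by
        rcases hk with h | h
        · subst h; exact hrow _ _ (Ne.symm h1) (Ne.symm h3)
        · subst h; exact hrow _ _ (Ne.symm h2) (Ne.symm h4)
      rw [this, mul_zero]
    · push_neg at hk
      rw [hcol' a k hk.1 hk.2, zero_mul]
  have expand : ∀ A B : Matrix (Fin N) (Fin N) ℂ,
      A * B = (A - 1) * (B - 1) + A + B - 1 := by
    intro A B; noncomm_ring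
  unfold Commute SemiconjBy
  rw [expand M M', expand M' M, hEE', hE'E]
  abel

lemma isBlock_Bmat {N : ℕ} (s t : Fin N) (R T : ℝ) : IsBlock s t (Bmat s t R T) := by
  intro a b hab
  by_cases has : a = s ∨ a = t
  · have hbs : ¬(b = s ∨ b = t) := fun h => hab ⟨has, h⟩
    push_neg at hbs
    have hb : a ≠ b := by
      rcases has with h | h <;> subst h
      · exact fun hc => hbs.1 hc.symm
      · exact fun hc => hbs.2 hc.symm
    rw [Matrix.one_apply_ne hb]
    rcases has with h | h <;> subst h <;> simp [Bmat, hbs.1, hbs.2]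
  · push_neg at has
    simp [Bmat, Matrix.one_apply, has.1, has.2]

lemma isBlock_one_sub_Pmat {N : ℕ} (j : Fin N) :
    IsBlock j j ((1 : Matrix (Fin N) (Fin N) ℂ) - Pmat j) := by
  intro a b hab
  have haj : a ≠ j ∨ b ≠ j := by tauto
  rw [oneSubP_diagonal]
  by_cases h : a = b
  · subst h
    have haj' : a ≠ j := by tauto
    simp [Matrix.diagonal_apply_eq, Matrix.one_apply_eq, haj']
  · simp [Matrix.diagonal_apply_ne _ h, Matrix.one_apply_ne h]

lemma isBlock_Smat {N : ℕ} (k : Fin N) (ω : ℝ) : IsBlock k k (Smat k ω) := by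
  intro a b hab
  have haj : a ≠ k ∨ b ≠ k := by tauto
  by_cases h : a = b
  · subst h
    have haj' : a ≠ k := by tauto
    simp [Smat, Matrix.diagonal_apply_eq, Matrix.one_apply_eq, haj']
  · simp [Smat, Matrix.diagonal_apply_ne _ h, Matrix.one_apply_ne h]

lemma isBlock_mul_diag {N : ℕ} (s t : Fin N) (M : Matrix (Fin N) (Fin N) ℂ)
    (hM : IsBlock s t M) (d : Fin N → ℂ) (hd : ∀ m, m ≠ s → m ≠ t → d m = 1) :
    IsBlock s t (M * Matrix.diagonal d) := by
  intro a b hab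
  rw [Matrix.mul_diagonal, hM a b hab]
  by_cases h : a = b
  · subst h
    have h1 : a ≠ s := fun hc => hab ⟨Or.inl hc, Or.inl hc⟩
    have h2 : a ≠ t := fun hc => hab ⟨Or.inr hc, Or.inr hc⟩
    rw [Matrix.one_apply_eq, hd a h1 h2, mul_one]
  · rw [Matrix.one_apply_ne h, zero_mul]

lemma isBlock_BmatD {N : ℕ} (s t : Fin N) (R T : ℝ) (τ : Fin N → ℝ) :
    IsBlock s t (Bmat s t R T * DmatST τ s t) := by
  unfold DmatST
  refine isBlock_mul_diag s t _ (isBlock_Bmat s t R T) _ ?_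
  intro m h1 h2
  simp [h1, h2]

/-! ## The matrix `W` of the configuration -/

noncomputable def Dprod {N : ℕ} (c : Config N) : Matrix (Fin N) (Fin N) ℂ :=
  c.De.noncommProd (fun j => 1 - Pmat j) (fun _ _ _ _ _ => commute_oneSubP _ _)

noncomputable def Sprod {N : ℕ} (c : Config N) : Matrix (Fin N) (Fin N) ℂ :=
  c.Sh.noncommProd (fun k => Smat k (c.ω k)) (fun _ _ _ _ _ => commute_diagonal _ _)

noncomputable def Bprod {N : ℕ} (c : Config N) : Matrix (Fin N) (Fin N) ℂ :=
  c.Bs.noncommProd (fun p => Bmat p.1 p.2 (c.R p) (c.T p))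
    (fun p hp q hq hpq => by
      obtain ⟨h1, h2, h3, h4⟩ := c.hBB p hp q hq hpq
      exact commute_of_isBlock (isBlock_Bmat _ _ _ _) (isBlock_Bmat _ _ _ _) h1 h2 h3 h4)

/-- The matrix `W = ∏_{j∈D}(1−P_j) ∏_{k∈S} S_k(ω_k) ∏_{{s,t}∈B} B_st(R_st,T_st)`. -/
noncomputable def Wmat {N : ℕ} (c : Config N) : Matrix (Fin N) (Fin N) ℂ :=
  Dprod c * Sprod c * Bprod c

/-- The vector `W z`. -/
noncomputable def Wvec {N : ℕ} (c : Config N) (z : Fin N → ℂ) : Fin N → ℂ :=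
  (Wmat c).mulVec z

/-- The product `∏_{{s,t}∈B} (B_st(R_st,T_st) Δ^(st)_τ)`. -/
noncomputable def BDprod {N : ℕ} (c : Config N) (τ : Fin N → ℝ) : Matrix (Fin N) (Fin N) ℂ :=
  c.Bs.noncommProd (fun p => Bmat p.1 p.2 (c.R p) (c.T p) * DmatST τ p.1 p.2)
    (fun p hp q hq hpq => by
      obtain ⟨h1, h2, h3, h4⟩ := c.hBB p hp q hq hpq
      exact commute_of_isBlock (isBlock_BmatD _ _ _ _ _) (isBlock_BmatD _ _ _ _ _) h1 h2 h3 h4)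

theorem propto_equivalence {N : ℕ} : Equivalence (Propto (N := N)) where
  refl v := ⟨1, one_ne_zero, (one_smul ℂ v).symm⟩
  symm := fun ⟨α, hα, hv⟩ => ⟨α⁻¹, inv_ne_zero hα, by rw [hv, inv_smul_smul₀ hα]⟩
  trans := fun ⟨α, hα, hu⟩ ⟨β, hβ, hv⟩ => ⟨α * β, mul_ne_zero hα hβ, by rw [hu, hv, smul_smul]⟩

theorem tmax_const {N : ℕ} [Nonempty (Fin N)] (c : ℝ) : tmax (fun _ : Fin N => c) = c :=
  ciSup_const

theorem deltaVec_const {N : ℕ} [Nonempty (Fin N)] (c : ℝ) (u : Fin N → ℂ) :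
    deltaVec (fun _ => c) u = u := by
  funext m
  simp [deltaVec, tmax_const]

theorem lamSet_eq_of_propto {N : ℕ} {z z' : Fin N → ℂ} (h : Propto z z') (i : Fin N) :
    lamSet z i = lamSet z' i := by
  ext l
  refine and_congr_right fun _ => and_congr_right fun _ => and_congr_right fun _ => ?_
  exact ⟨fun hl => propto_equivalence.trans hl h,
    fun hl => propto_equivalence.trans hl (propto_equivalence.symm h)⟩

theorem mem_lamSet_of_const_strength {N : ℕ} (z : Fin N → ℂ) (i : Fin N) :
    (i, z, fun _ => 1) ∈ lamSet z i := by
  have : Nonempty (Fin N) := ⟨i⟩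
  refine ⟨rfl, (tmax_const 1).symm, by rw [tmax_const]; exact one_pos, ?_⟩
  rw [deltaVec_const]
  exact propto_equivalence.refl z

theorem eq_and_propto_of_mem_lamSet_inter {N : ℕ} {z z' : Fin N → ℂ} {i j : Fin N}
    {l : Lam N} (hl : l ∈ lamSet z i ∩ lamSet z' j) : i = j ∧ Propto z z' := by
  obtain ⟨⟨rfl, -, -, hz⟩, ⟨hj, -, -, hz'⟩⟩ := hl
  exact ⟨hj, propto_equivalence.trans (propto_equivalence.symm hz) hz'⟩

/-- `Λ_z^i ∩ Λ_{z'}^j ≠ ∅ ↔ i = j ∧ z ∼ z'` (in which case the two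
sets coincide). -/
theorem lamSet_inter_nonempty_iff {N : ℕ} (i j : Fin N) (z z' : Fin N → ℂ) :
    ((lamSet z i ∩ lamSet z' j).Nonempty ↔ i = j ∧ Propto z z') ∧
    (i = j ∧ Propto z z' → lamSet z i = lamSet z' j) := by
  have h_eq : i = j ∧ Propto z z' → lamSet z i = lamSet z' j := by
    rintro ⟨rfl, h⟩
    exact lamSet_eq_of_propto h i
  refine ⟨⟨fun ⟨_, hl⟩ => eq_and_propto_of_mem_lamSet_inter hl, fun h => ?_⟩, h_eq⟩
  rw [h_eq h, Set.inter_self]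
  exact ⟨_, mem_lamSet_of_const_strength z' j⟩

end SPI
end

section
/- (Lemma 1, second part, no beam splitter.) Let a parallel gate configuration have no detector in path i (i ∉ D) and path i not entering any beam splitter (i ∉ ⋃B), let z ∈ ℂ^N, and let p ∈ [z]_i. Then no detector Clicks (p({λ : q = j}) = 0 for every j ∈ D) and the output measure pK belongs to [Wz]_i. -/
open MeasureTheory
open scoped Classical

namespace SPI

/-!
Since path `i` enters no beam splitter, the kernel acts on `Λ_z^i` as a deterministic map, so
`pK` is the image of `p` under that gate update. The particle is not on a detector path, so
detector paths drop to strength `0`, while all other strengths are halved (beam-splitter pairs to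
half their common maximum). Hence `τ_i` stays maximal, the maximal-strength entries of the new
amplitudes are exactly `W Δ_τ u`, and the update maps `Λ_z^i` into `Λ_{Wz}^i`.
-/

open scoped Matrix

section NoncommProd

variable {n ι : Type*} [Fintype n] [DecidableEq n]

lemma noncommProd_diagonal {α : Type*} [CommSemiring α] (s : Finset ι) (d : ι → n → α) (comm) :
    s.noncommProd (fun j => Matrix.diagonal (d j)) comm = Matrix.diagonal (∏ j ∈ s, d j) := by
  calc _ = Matrix.diagonalRingHom n α (s.noncommProd d fun _ _ _ _ _ => Commute.all _ _) :=
        (Finset.map_noncommProd _ _ _ _).symm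
    _ = _ := by rw [Finset.noncommProd_eq_prod]; rfl

lemma noncommProd_mulVec_apply_eq_self {α : Type*} [Semiring α] (s : Finset ι)
    (f : ι → Matrix n n α) (comm) {m : n} (h : ∀ a ∈ s, ∀ v, (f a *ᵥ v) m = v m) (v : n → α) :
    (s.noncommProd f comm *ᵥ v) m = v m := by
  induction s using Finset.cons_induction generalizing v with
  | empty => simp
  | cons a s ha ih =>
    rw [Finset.noncommProd_cons, ← Matrix.mulVec_mulVec, h a (Finset.mem_cons_self a s),
      ih _ fun b hb => h b (Finset.mem_cons_of_mem hb)]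

end NoncommProd

section Matrices

variable {N : ℕ}

lemma Bmat_mulVec_apply_of_ne {s t m : Fin N} (hs : m ≠ s) (ht : m ≠ t) (R T : ℝ)
    (v : Fin N → ℂ) :
    (Bmat s t R T *ᵥ v) m = v m := by
  simp [Bmat, Matrix.mulVec, dotProduct, hs, ht]

lemma Bmat_mulVec_fst {s t : Fin N} (hst : s ≠ t) (R T : ℝ) (v : Fin N → ℂ) :
    (Bmat s t R T *ᵥ v) s = Complex.I * (Real.sqrt R : ℂ) * v s + (Real.sqrt T : ℂ) * v t := by
  rw [Matrix.mulVec, dotProduct,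
    Fintype.sum_eq_add s t hst fun b ⟨hbs, hbt⟩ => by simp [Bmat, hbs, hbt]]
  simp [Bmat, hst.symm]

lemma Bmat_mulVec_snd {s t : Fin N} (hst : s ≠ t) (R T : ℝ) (v : Fin N → ℂ) :
    (Bmat s t R T *ᵥ v) t = (Real.sqrt T : ℂ) * v s + Complex.I * (Real.sqrt R : ℂ) * v t := by
  rw [Matrix.mulVec, dotProduct,
    Fintype.sum_eq_add s t hst fun b ⟨hbs, hbt⟩ => by simp [Bmat, hbs, hbt]]
  simp [Bmat, hst.symm]

lemma Bmat_mulVec_congr {s t m : Fin N} (hst : s ≠ t) (hm : m = s ∨ m = t) {R T : ℝ}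
    {v w : Fin N → ℂ} (hs : v s = w s) (ht : v t = w t) :
    (Bmat s t R T *ᵥ v) m = (Bmat s t R T *ᵥ w) m := by
  rcases hm with rfl | rfl
  · rw [Bmat_mulVec_fst hst, Bmat_mulVec_fst hst, hs, ht]
  · rw [Bmat_mulVec_snd hst, Bmat_mulVec_snd hst, hs, ht]

lemma Dprod_mulVec_apply (c : Config N) (v : Fin N → ℂ) (m : Fin N) :
    (Dprod c *ᵥ v) m = if m ∈ c.De then 0 else v m := by
  have hD : Dprod c = Matrix.diagonal (∏ j ∈ c.De, fun a => 1 - if a = j then 1 else 0) :=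
    (Finset.noncommProd_congr rfl (fun j _ => oneSubP_diagonal j) _).trans
      (noncommProd_diagonal _ _ _)
  rw [hD, Matrix.mulVec_diagonal, Finset.prod_apply]
  simp only [sub_ite, sub_self, sub_zero, Finset.prod_ite_eq, ite_mul, zero_mul, one_mul]

lemma Sprod_mulVec_apply (c : Config N) (v : Fin N → ℂ) (m : Fin N) :
    (Sprod c *ᵥ v) m = if m ∈ c.Sh then Complex.exp (Complex.I * (c.ω m : ℂ)) * v m else v m := by
  have hS : Sprod c = Matrix.diagonal
      (∏ k ∈ c.Sh, fun a => if a = k then Complex.exp (Complex.I * (c.ω k : ℂ)) else 1) :=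
    noncommProd_diagonal _ _ _
  rw [hS, Matrix.mulVec_diagonal, Finset.prod_apply]
  simp only [Finset.prod_ite_eq, ite_mul, one_mul]

lemma Bprod_mulVec_apply_of_not_inB (c : Config N) {m : Fin N} (hm : ¬ inB c m) (v : Fin N → ℂ) :
    (Bprod c *ᵥ v) m = v m :=
  noncommProd_mulVec_apply_eq_self _ _ _ (fun p hp => Bmat_mulVec_apply_of_ne
    (fun h => hm ⟨p, hp, .inl h⟩) (fun h => hm ⟨p, hp, .inr h⟩) _ _) v

lemma Bprod_mulVec_apply_of_mem {c : Config N} {p : Fin N × Fin N} (hp : p ∈ c.Bs) {m : Fin N}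
    (hm : m = p.1 ∨ m = p.2) (v : Fin N → ℂ) :
    (Bprod c *ᵥ v) m = (Bmat p.1 p.2 (c.R p) (c.T p) *ᵥ v) m := by
  obtain ⟨rest, hsplit, hfix⟩ : ∃ rest, Bprod c = Bmat p.1 p.2 (c.R p) (c.T p) * rest ∧
      ∀ k, k = p.1 ∨ k = p.2 → (rest *ᵥ v) k = v k := by
    refine ⟨_, (Finset.mul_noncommProd_erase c.Bs hp _ _).symm, fun k hk => ?_⟩
    refine noncommProd_mulVec_apply_eq_self _ _ _ (fun q hq => ?_) v
    obtain ⟨h11, h12, h21, h22⟩ :=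
      c.hBB p hp q (Finset.mem_of_mem_erase hq) (Finset.ne_of_mem_erase hq).symm
    rcases hk with rfl | rfl
    exacts [Bmat_mulVec_apply_of_ne h11 h12 _ _, Bmat_mulVec_apply_of_ne h21 h22 _ _]
  rw [hsplit, ← Matrix.mulVec_mulVec]
  rcases hm with rfl | rfl
  · rw [Bmat_mulVec_fst (c.hst p hp), Bmat_mulVec_fst (c.hst p hp), hfix _ (.inl rfl),
      hfix _ (.inr rfl)]
  · rw [Bmat_mulVec_snd (c.hst p hp), Bmat_mulVec_snd (c.hst p hp), hfix _ (.inl rfl),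
      hfix _ (.inr rfl)]

lemma Wmat_mulVec_apply (c : Config N) (v : Fin N → ℂ) (m : Fin N) :
    (Wmat c *ᵥ v) m = if m ∈ c.De then 0
      else if m ∈ c.Sh then Complex.exp (Complex.I * (c.ω m : ℂ)) * (Bprod c *ᵥ v) m
      else (Bprod c *ᵥ v) m := by
  rw [Wmat, ← Matrix.mulVec_mulVec, ← Matrix.mulVec_mulVec, Dprod_mulVec_apply,
    Sprod_mulVec_apply]

end Matrices

section Dynamics

variable {N : ℕ} (c : Config N) {q m : Fin N} {u : Fin N → ℂ} {τ : Fin N → ℝ}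

lemma le_tmax (τ : Fin N → ℝ) (j : Fin N) : τ j ≤ tmax τ :=
  le_ciSup (Finite.bddAbove_range τ) j

lemma choose_eq_of_mem {p : Fin N × Fin N} (hp : p ∈ c.Bs) (hm : m = p.1 ∨ m = p.2)
    (h : inB c m) : h.choose = p := by
  obtain ⟨hq, hmq⟩ := h.choose_spec
  by_contra hne
  obtain ⟨h11, h12, h21, h22⟩ := c.hBB _ hq p hp hne
  rcases hm with rfl | rfl <;> rcases hmq with h | h
  exacts [h11 h.symm, h21 h.symm, h12 h.symm, h22 h.symm]

lemma not_mem_De_of_inB (h : inB c m) : m ∉ c.De := by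
  obtain ⟨p, hp, rfl | rfl⟩ := h
  exacts [(c.hBdisj p hp).2.2.1, (c.hBdisj p hp).2.2.2.1]

lemma not_mem_Sh_of_inB (h : inB c m) : m ∉ c.Sh := by
  obtain ⟨p, hp, rfl | rfl⟩ := h
  exacts [(c.hBdisj p hp).2.2.2.2.1, (c.hBdisj p hp).2.2.2.2.2]

lemma newTau_of_mem_De (hq : q ∉ c.De) (hm : m ∈ c.De) : newTau c q τ m = 0 := by
  simp [newTau, hm, ne_of_mem_of_not_mem hm hq |>.symm]

lemma newTau_of_not_inB (hD : m ∉ c.De) (hB : ¬ inB c m) : newTau c q τ m = τ m / 2 := by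
  simp [newTau, hD, hB]

lemma newTau_of_mem_Bs {p : Fin N × Fin N} (hp : p ∈ c.Bs) (hm : m = p.1 ∨ m = p.2) :
    newTau c q τ m = max (τ p.1) (τ p.2) / 2 := by
  have hB : inB c m := ⟨p, hp, hm⟩
  simp only [newTau, not_mem_De_of_inB c hB, dif_pos hB, choose_eq_of_mem c hp hm hB, if_false]

lemma newTau_le_half_tmax (hq : q ∉ c.De) (h0 : 0 ≤ tmax τ) (m : Fin N) :
    newTau c q τ m ≤ tmax τ / 2 := by
  unfold newTau
  split_ifs with hD hqm
  · exact absurd (hqm ▸ hD) hq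
  · linarith
  · gcongr; exact max_le (le_tmax τ _) (le_tmax τ _)
  · gcongr; exact le_tmax τ m

lemma tmax_newTau (hq : q ∉ c.De) (hqB : ¬ inB c q) (hτq : τ q = tmax τ) (h0 : 0 ≤ tmax τ) :
    tmax (newTau c q τ) = tmax τ / 2 :=
  haveI : Nonempty (Fin N) := ⟨q⟩
  le_antisymm (ciSup_le (newTau_le_half_tmax c hq h0))
    (by rw [← hτq, ← newTau_of_not_inB c hq hqB]; exact le_tmax _ q)

lemma newAmp_of_mem_Sh (hm : m ∈ c.Sh) :
    newAmp c q u τ m = Complex.exp (Complex.I * (c.ω m : ℂ)) * u m := by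
  simp [newAmp, hm, Finset.disjoint_right.1 c.hDS hm]

lemma newAmp_of_not_inB (hD : m ∉ c.De) (hS : m ∉ c.Sh) (hB : ¬ inB c m) :
    newAmp c q u τ m = u m := by
  simp [newAmp, hD, hS, hB]

lemma newAmp_of_mem_Bs {p : Fin N × Fin N} (hp : p ∈ c.Bs) (hm : m = p.1 ∨ m = p.2) :
    newAmp c q u τ m = (Bmat p.1 p.2 (c.R p) (c.T p) *ᵥ
      fun k => if τ k = max (τ p.1) (τ p.2) then u k else 0) m := by
  have hB : inB c m := ⟨p, hp, hm⟩
  simp only [newAmp, not_mem_De_of_inB c hB, not_mem_Sh_of_inB c hB, dif_pos hB,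
    choose_eq_of_mem c hp hm hB, if_false]
  rcases hm with rfl | rfl
  · rw [Bmat_mulVec_fst (c.hst p hp), if_pos rfl]
  · rw [Bmat_mulVec_snd (c.hst p hp), if_neg (c.hst p hp).symm]

lemma deltaVec_apply_of_halved {τ' : Fin N → ℝ} {u' : Fin N → ℂ} {k : ℂ}
    (hmax : tmax τ' = tmax τ / 2) (hτ : τ' m = τ m / 2) (hu : u' m = k * u m) :
    deltaVec τ' u' m = k * deltaVec τ u m := by
  simp only [deltaVec, hmax, hτ, hu, div_left_inj' (two_ne_zero' ℝ), mul_ite, mul_zero]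

lemma deltaVec_newTau_newAmp_of_mem_Bs {p : Fin N × Fin N} (hp : p ∈ c.Bs)
    (hm : m = p.1 ∨ m = p.2) (hmax : tmax (newTau c q τ) = tmax τ / 2) :
    deltaVec (newTau c q τ) (newAmp c q u τ) m
      = (Bmat p.1 p.2 (c.R p) (c.T p) *ᵥ deltaVec τ u) m := by
  simp only [deltaVec, hmax, newTau_of_mem_Bs c hp hm, newAmp_of_mem_Bs c hp hm,
    div_left_inj' (two_ne_zero' ℝ)]
  rcases (max_le (le_tmax τ p.1) (le_tmax τ p.2)).eq_or_lt with hM | hM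
  · rw [if_pos hM]
    exact Bmat_mulVec_congr (c.hst p hp) hm (by simp [deltaVec, hM]) (by simp [deltaVec, hM])
  · rw [if_neg hM.ne, Bmat_mulVec_congr (c.hst p hp) hm (w := 0), Matrix.mulVec_zero, Pi.zero_apply]
    · exact if_neg (lt_of_le_of_lt (le_max_left _ _) hM).ne
    · exact if_neg (lt_of_le_of_lt (le_max_right _ _) hM).ne

lemma deltaVec_newTau_newAmp (hq : q ∉ c.De) (hpos : 0 < tmax τ)
    (hmax : tmax (newTau c q τ) = tmax τ / 2) :
    deltaVec (newTau c q τ) (newAmp c q u τ) = Wmat c *ᵥ deltaVec τ u := by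
  funext m
  rw [Wmat_mulVec_apply]
  by_cases hD : m ∈ c.De
  · rw [if_pos hD]
    exact if_neg (by rw [newTau_of_mem_De c hq hD, hmax]; positivity)
  by_cases hS : m ∈ c.Sh
  · have hB : ¬ inB c m := fun h => not_mem_Sh_of_inB c h hS
    rw [if_neg hD, if_pos hS, Bprod_mulVec_apply_of_not_inB c hB]
    exact deltaVec_apply_of_halved hmax (newTau_of_not_inB c hD hB) (newAmp_of_mem_Sh c hS)
  rw [if_neg hD, if_neg hS]
  by_cases hB : inB c m
  · obtain ⟨p, hp, hm⟩ := hB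
    rw [Bprod_mulVec_apply_of_mem hp hm]
    exact deltaVec_newTau_newAmp_of_mem_Bs c hp hm hmax
  · rw [Bprod_mulVec_apply_of_not_inB c hB, ← one_mul (deltaVec τ u m)]
    exact deltaVec_apply_of_halved hmax (newTau_of_not_inB c hD hB)
      ((newAmp_of_not_inB c hD hS hB).trans (one_mul _).symm)

noncomputable def gateUpdate (l : Lam N) : Lam N :=
  (l.1, newAmp c l.1 l.2.1 l.2.2, newTau c l.1 l.2.2)

lemma gateUpdate_mem_lamSet {i : Fin N} (hiD : i ∉ c.De) (hiB : ¬ inB c i) {z : Fin N → ℂ}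
    {l : Lam N} (hl : l ∈ lamSet z i) : gateUpdate c l ∈ lamSet (Wvec c z) i := by
  obtain ⟨q, u, τ⟩ := l
  obtain ⟨rfl, hτq, hpos, α, hα, hΔ⟩ :
      q = i ∧ τ i = tmax τ ∧ 0 < tmax τ ∧ Propto (deltaVec τ u) z := hl
  have hmax := tmax_newTau c hiD hiB hτq hpos.le
  refine ⟨rfl, ?_, ?_, α, hα, ?_⟩
  · change newTau c q τ q = tmax (newTau c q τ)
    rw [hmax, newTau_of_not_inB c hiD hiB, hτq]
  · change 0 < tmax (newTau c q τ)
    rw [hmax]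
    positivity
  · change deltaVec (newTau c q τ) (newAmp c q u τ) = _
    rw [deltaVec_newTau_newAmp c hiD hpos hmax, hΔ, Matrix.mulVec_smul, Wvec]

lemma step_eq_dirac_gateUpdate {l : Lam N} (h : ¬ inB c l.1) :
    step c l = Measure.dirac (gateUpdate c l) := by
  simp only [step, dif_neg h]
  rfl

lemma measurable_gateUpdate : Measurable (gateUpdate c) := by
  refine measurable_fst.prodMk (.prodMk ?_ ?_) <;> refine measurable_pi_lambda _ fun m => ?_
  · unfold newAmp
    by_cases hD : m ∈ c.De <;> by_cases hS : m ∈ c.Sh <;> by_cases hB : inB c m <;>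
      simp only [hD, hS, hB, if_true, if_false, dif_pos, dif_neg, not_false_eq_true] <;>
      repeat' first
        | fun_prop | apply Measurable.add | apply Measurable.const_mul | apply Measurable.ite
        | exact measurableSet_eq_fun (by fun_prop) (by fun_prop)
  · unfold newTau
    by_cases hD : m ∈ c.De <;> by_cases hB : inB c m <;>
      simp only [hD, hB, if_true, if_false, dif_pos, dif_neg, not_false_eq_true] <;>
      repeat' first
        | fun_prop | apply Measurable.ite | exact measurableSet_eq_fun (by fun_prop) (by fun_prop)

lemma out_eq_map_gateUpdate {μ : Measure (Lam N)} (h : ∀ᵐ l ∂μ, ¬ inB c l.1) :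
    out c μ = μ.map (gateUpdate c) := by
  rw [out, Measure.bind_congr_right (h.mono fun l hl => step_eq_dirac_gateUpdate c hl),
    Measure.bind_dirac_eq_map _ (measurable_gateUpdate c)]

end Dynamics

/-- Lemma 1, second part, no beam splitter. If `i ∉ D`, `i ∉ ⋃B` and
`p ∈ [z]_i`, then no detector Clicks and `pK ∈ [Wz]_i`. -/
theorem lemma1_no_beam_splitter {N : ℕ} (c : Config N) (i : Fin N) (hiD : i ∉ c.De)
    (hiB : ¬ inB c i) (z : Fin N → ℂ) (p : Measure (Lam N)) (hp : memClassI z i p) :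
    (∀ j ∈ c.De, p {l : Lam N | l.1 = j} = 0) ∧
    memClassI (Wvec c z) i (out c p) := by
  obtain ⟨_, hfull⟩ := hp
  have hpath : ∀ᵐ l ∂p, l.1 = i := by
    have hA : MeasurableSet {l : Lam N | l.1 = i} :=
      measurableSet_eq_fun measurable_fst measurable_const
    refine (ae_iff_measure_eq hA.nullMeasurableSet).2 ?_
    rw [measure_univ]
    exact le_antisymm prob_le_one (hfull ▸ measure_mono fun l hl => hl.1)
  refine ⟨fun j hj => measure_mono_null ?_ (ae_iff.1 hpath), ?_⟩
  · rintro l (hlj : l.1 = j) (hli : l.1 = i)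
    exact hiD (hli ▸ hlj ▸ hj)
  have hmeas := (measurable_gateUpdate c).aemeasurable (μ := p)
  rw [out_eq_map_gateUpdate c (hpath.mono fun l hl => hl ▸ hiB)]
  refine ⟨Measure.isProbabilityMeasure_map hmeas, le_antisymm prob_le_one ?_⟩
  calc 1 = p (lamSet z i) := hfull.symm
    _ ≤ p (gateUpdate c ⁻¹' lamSet (Wvec c z) i) :=
      measure_mono fun l hl => gateUpdate_mem_lamSet c hiD hiB hl
    _ ≤ p.map (gateUpdate c) (lamSet (Wvec c z) i) := Measure.le_map_apply hmeas _

end SPI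
end

section
/- (Theorem 1, phase-shifter bullet.) Consider the parallel gate configuration with a single phase shifter in path j with phase ω (S = {j}), all other paths free (F = {1,…,N}∖{j}), and no detectors or beam splitters (D = ∅, B = ∅). Let z ∈ ℂ^N be a unit vector and p ∈ [z]. Then the output measure pK belongs to [z'], where z'_j = e^{iω} z_j and z'_m = z_m for all m ≠ j. -/
/-!
Without detectors or beam splitters the kernel is deterministic: it halves every strength and
multiplies `u_j` by `e^{iω}`. Halving keeps the set of maximal strengths, and the phase is a
linear map acting entrywise, so it commutes with `Δ_τ` and preserves proportionality; hence
`Λ_z^i` is carried into `Λ_{z'}^i`. As `|z'_i| = |z_i|`, the mixture weights are unchanged.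
-/

open MeasureTheory
open scoped Classical

namespace SPI

noncomputable def phaseShift {N : ℕ} (j : Fin N) (ω : ℝ) (z : Fin N → ℂ) : Fin N → ℂ :=
  fun m => if m = j then Complex.exp (Complex.I * (ω : ℂ)) * z j else z m

lemma norm_phaseShift {N : ℕ} (j : Fin N) (ω : ℝ) (z : Fin N → ℂ) (m : Fin N) :
    ‖phaseShift j ω z m‖ = ‖z m‖ := by
  by_cases hm : m = j
  · subst hm
    simp [phaseShift, Complex.norm_exp]
  · simp [phaseShift, hm]

lemma phaseShift_smul {N : ℕ} (j : Fin N) (ω : ℝ) (α : ℂ) (z : Fin N → ℂ) :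
    phaseShift j ω (α • z) = α • phaseShift j ω z := by
  funext m
  by_cases hm : m = j <;> simp [phaseShift, hm, mul_left_comm]

lemma Propto.phaseShift {N : ℕ} {v w : Fin N → ℂ} (j : Fin N) (ω : ℝ) (h : Propto v w) :
    Propto (phaseShift j ω v) (phaseShift j ω w) := by
  obtain ⟨α, hα, rfl⟩ := h
  exact ⟨α, hα, phaseShift_smul j ω α w⟩

lemma tmax_div_two {N : ℕ} (τ : Fin N → ℝ) : tmax (fun m => τ m / 2) = tmax τ / 2 := by
  simp only [tmax, div_eq_inv_mul, Real.mul_iSup_of_nonneg (by norm_num : (0 : ℝ) ≤ 2⁻¹)]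

/-- Halving all strengths keeps the set of maximal entries. -/
lemma deltaVec_div_two_phaseShift {N : ℕ} (j : Fin N) (ω : ℝ) (τ : Fin N → ℝ)
    (u : Fin N → ℂ) :
    deltaVec (fun m => τ m / 2) (phaseShift j ω u) = phaseShift j ω (deltaVec τ u) := by
  funext m
  have hmax : ∀ k, (τ k / 2 = tmax fun m => τ m / 2) ↔ τ k = tmax τ := fun k => by
    rw [tmax_div_two]; constructor <;> intro h <;> linarith
  simp only [deltaVec, phaseShift, hmax]
  split_ifs <;> simp_all

noncomputable def phaseShiftMap {N : ℕ} (j : Fin N) (ω : ℝ) (l : Lam N) : Lam N :=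
  (l.1, phaseShift j ω l.2.1, fun m => l.2.2 m / 2)

lemma measurable_phaseShiftMap {N : ℕ} (j : Fin N) (ω : ℝ) :
    Measurable (phaseShiftMap j ω) := by
  refine measurable_fst.prodMk (Measurable.prodMk ?_ ?_)
  · refine measurable_pi_lambda _ fun m => ?_
    by_cases hm : m = j
    · simp only [phaseShift, if_pos hm]; fun_prop
    · simp only [phaseShift, if_neg hm]; fun_prop
  · exact measurable_pi_lambda _ fun m => by fun_prop

lemma lamSet_subset_preimage_phaseShiftMap {N : ℕ} (j : Fin N) (ω : ℝ) (z : Fin N → ℂ)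
    (i : Fin N) : lamSet z i ⊆ phaseShiftMap j ω ⁻¹' lamSet (phaseShift j ω z) i := by
  rintro ⟨q, u, τ⟩ ⟨hq, hτi, hpos, hprop⟩
  refine ⟨hq, ?_, ?_, ?_⟩
  · change τ i / 2 = tmax fun m => τ m / 2
    rw [tmax_div_two, show τ i = tmax τ from hτi]
  · change 0 < tmax fun m => τ m / 2
    rw [tmax_div_two]
    exact half_pos hpos
  · change Propto (deltaVec (fun m => τ m / 2) (phaseShift j ω u)) (phaseShift j ω z)
    rw [deltaVec_div_two_phaseShift]
    exact hprop.phaseShift j ω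

lemma step_eq_dirac_phaseShiftMap {N : ℕ} (c : Config N) (j : Fin N) (ω : ℝ)
    (hSh : c.Sh = {j}) (hω : c.ω j = ω) (hDe : c.De = ∅) (hBs : c.Bs = ∅) (l : Lam N) :
    step c l = Measure.dirac (phaseShiftMap j ω l) := by
  have hB : ∀ m, ¬ inB c m := by simp [inB, hBs]
  simp only [step, dif_neg (hB l.1)]
  congr 1
  refine Prod.ext rfl (Prod.ext (funext fun m => ?_) (funext fun m => ?_))
  · by_cases hm : m = j
    · subst hm
      simp [newAmp, phaseShiftMap, phaseShift, hDe, hSh, hω]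
    · simp [newAmp, phaseShiftMap, phaseShift, hDe, hSh, hm, hB m]
  · simp [newTau, phaseShiftMap, hDe, hB m]

section MapClass

variable {N : ℕ} {z z' : Fin N → ℂ} {T : Lam N → Lam N}

lemma memClassI.map {i : Fin N} {μ : Measure (Lam N)} (hT : Measurable T)
    (hsub : lamSet z i ⊆ T ⁻¹' lamSet z' i) (hμ : memClassI z i μ) :
    memClassI z' i (μ.map T) := by
  obtain ⟨hprob, hfull⟩ := hμ
  refine ⟨Measure.isProbabilityMeasure_map hT.aemeasurable, le_antisymm prob_le_one ?_⟩
  calc (1 : ENNReal) = μ (lamSet z i) := hfull.symm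
    _ ≤ μ (T ⁻¹' lamSet z' i) := measure_mono hsub
    _ ≤ μ.map T (lamSet z' i) := Measure.le_map_apply hT.aemeasurable _

lemma memClass.map {μ : Measure (Lam N)} (hT : Measurable T) (hnorm : ∀ i, ‖z' i‖ = ‖z i‖)
    (hsub : ∀ i, lamSet z i ⊆ T ⁻¹' lamSet z' i) (hμ : memClass z μ) :
    memClass z' (μ.map T) := by
  obtain ⟨f, hf, rfl⟩ := hμ
  refine ⟨fun i => (f i).map T, fun i hi => (hf i ?_).map hT (hsub i), ?_⟩
  · rwa [← norm_ne_zero_iff, ← hnorm, norm_ne_zero_iff]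
  · rw [Measure.map_finset_sum' hT.aemeasurable]
    simp only [Measure.map_smul, hnorm]

end MapClass

theorem thm1_phase_shifter_general {N : ℕ} (c : Config N) (j : Fin N) (ω : ℝ)
    (hSh : c.Sh = {j}) (hω : c.ω j = ω) (hDe : c.De = ∅) (hBs : c.Bs = ∅)
    (z : Fin N → ℂ) (p : Measure (Lam N)) (hp : memClass z p) :
    memClass (fun m => if m = j then Complex.exp (Complex.I * (ω : ℂ)) * z j else z m)
      (out c p) := by
  have hmeas := measurable_phaseShiftMap j ω
  have hout : out c p = p.map (phaseShiftMap j ω) := by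
    rw [out, funext (step_eq_dirac_phaseShiftMap c j ω hSh hω hDe hBs)]
    exact Measure.bind_dirac_eq_map p hmeas
  rw [hout]
  exact hp.map hmeas (norm_phaseShift j ω z) (lamSet_subset_preimage_phaseShiftMap j ω z)

/-- Theorem 1, phase-shifter bullet. A single phase shifter `S_j` with
phase `ω` (all other paths free) maps `[z]` into `[z']` with `z'_j = e^{iω} z_j` and
`z'_m = z_m` otherwise. -/
theorem thm1_phase_shifter {N : ℕ} (c : Config N) (j : Fin N) (ω : ℝ)
    (hSh : c.Sh = {j}) (hω : c.ω j = ω) (hDe : c.De = ∅) (hBs : c.Bs = ∅)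
    (hFr : c.Fr = Finset.univ \ {j}) (z : Fin N → ℂ)
    (hz : ∑ i, ‖z i‖ ^ 2 = 1) (p : Measure (Lam N)) (hp : memClass z p) :
    memClass (fun m => if m = j then Complex.exp (Complex.I * (ω : ℂ)) * z j else z m)
      (out c p) :=
  thm1_phase_shifter_general c j ω hSh hω hDe hBs z p hp

end SPI
end
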